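/- arXiv:1911.01017 — 4 statements merged into one kernel-verified Lean document; each statement's English description precedes it below -/
import Mathlib

section
/- The function σ_λ(x,y) := λ^{L(x,y) − L(x,o) − L(y,o)} (with σ_λ(x,x) = 0) defines an unbounded ultrametric on F^∞ \ {o}. -/
open Classical

/-- `agree x y` is the number of initial coordinates on which the sequences
`x, y : ℕ → F` agree (`0` by convention when `x = y`). -/
noncomputable def agree {F : Type*} (x y : ℕ → F) : ℕ :=
  if h : x = y then 0 else Nat.find (Function.ne_iff.mp h)

/-- The flattened Cantor distance
`σ_λ(x,y) = λ^{L(x,y) - L(x,o) - L(y,o)}`, with `σ_λ(x,x) = 0`. -/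
noncomputable def sigma {F : Type*} (lam : ℝ) (o x y : ℕ → F) : ℝ :=
  if x = y then 0
  else lam ^ ((agree x y : ℤ) - (agree x o : ℤ) - (agree y o : ℤ))

section aux

variable {F : Type*}

lemma agree_prefix {x y : ℕ → F} (h : x ≠ y) : ∀ i < agree x y, x i = y i := by
  intro i hi
  rw [agree, dif_neg h] at hi
  have := Nat.find_min (Function.ne_iff.mp h) hi
  simpa using this

lemma agree_ne {x y : ℕ → F} (h : x ≠ y) : x (agree x y) ≠ y (agree x y) := by
  rw [agree, dif_neg h]
  exact Nat.find_spec (Function.ne_iff.mp h)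

lemma agree_eq_of {x y : ℕ → F} (h : x ≠ y) {n : ℕ} (hn : x n ≠ y n)
    (hlt : ∀ i < n, x i = y i) : agree x y = n := by
  rw [agree, dif_neg h]
  refine le_antisymm (Nat.find_le hn) ?_
  rw [Nat.le_find_iff]
  intro m hm
  simpa using hlt m hm

lemma agree_comm (x y : ℕ → F) : agree x y = agree y x := by
  by_cases h : x = y
  · rw [h]
  · exact agree_eq_of h (fun hc => agree_ne (Ne.symm h) hc.symm)
      (fun i hi => (agree_prefix (Ne.symm h) i hi).symm)

lemma agree_min {x y z : ℕ → F} (hxy : x ≠ y) (hxz : x ≠ z) (hzy : z ≠ y) :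
    min (agree x z) (agree z y) ≤ agree x y := by
  by_contra hlt
  push_neg at hlt
  have h1 : x (agree x y) = z (agree x y) :=
    agree_prefix hxz _ (lt_of_lt_of_le hlt (min_le_left _ _))
  have h2 : z (agree x y) = y (agree x y) :=
    agree_prefix hzy _ (lt_of_lt_of_le hlt (min_le_right _ _))
  exact agree_ne hxy (h1.trans h2)

lemma sigma_nonneg {lam : ℝ} (h0 : 0 < lam) (o x y : ℕ → F) :
    0 ≤ sigma lam o x y := by
  rw [sigma]
  split
  · exact le_refl 0
  · exact zpow_nonneg h0.le _

end aux

/-- `σ_λ` is an unbounded ultrametric on `F^∞ \ {o}`: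
it is symmetric, vanishes exactly on the diagonal, satisfies the strong
triangle inequality, and is unbounded. -/
theorem sigma_unbounded_ultrametric {F : Type*} [Fintype F]
    (hk : 2 ≤ Fintype.card F) (lam : ℝ) (h0 : 0 < lam) (h1 : lam < 1)
    (o : ℕ → F) :
    (∀ x y : ℕ → F, x ≠ o → y ≠ o → sigma lam o x y = sigma lam o y x) ∧
    (∀ x y : ℕ → F, x ≠ o → y ≠ o → (sigma lam o x y = 0 ↔ x = y)) ∧
    (∀ x y z : ℕ → F, x ≠ o → y ≠ o → z ≠ o →
      sigma lam o x y ≤ max (sigma lam o x z) (sigma lam o z y)) ∧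
    (∀ M : ℝ, 0 < M → ∃ x y : ℕ → F, x ≠ o ∧ y ≠ o ∧ M < sigma lam o x y) := by
  refine ⟨?_, ?_, ?_, ?_⟩
  · -- symmetry
    intro x y _ _
    by_cases h : x = y
    · rw [h]
    · rw [sigma, sigma, if_neg h, if_neg (Ne.symm h), agree_comm x y]
      congr 1
      ring
  · -- vanishing
    intro x y _ _
    constructor
    · intro h
      by_contra hne
      rw [sigma, if_neg hne] at h
      exact zpow_ne_zero _ (ne_of_gt h0) h
    · intro h
      rw [sigma, if_pos h]
  · -- ultrametric inequality
    intro x y z hxo hyo hzo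
    by_cases hxy : x = y
    · rw [sigma, if_pos hxy]
      exact le_max_of_le_left (sigma_nonneg h0 o x z)
    by_cases hxz : x = z
    · rw [hxz]
      exact le_max_right _ _
    by_cases hzy : z = y
    · rw [← hzy]
      exact le_max_left _ _
    rw [sigma, sigma, sigma, if_neg hxy, if_neg hxz, if_neg hzy]
    -- gather all ultrametric inequalities for the four points x,y,z,o
    have T1 := agree_min hxy hxz hzy
    have T2 := agree_min hxz hxy (Ne.symm hzy)
    have T3 := agree_min hzy (Ne.symm hxz) hxy
    have T4 := agree_min hxy hxo (Ne.symm hyo)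
    have T5 := agree_min hxo hxy hyo
    have T6 := agree_min hyo (Ne.symm hxy) hxo
    have T7 := agree_min hxz hxo (Ne.symm hzo)
    have T8 := agree_min hxo hxz hzo
    have T9 := agree_min hzo (Ne.symm hxz) hxo
    have T10 := agree_min hzy hzo (Ne.symm hyo)
    have T11 := agree_min hzo hzy hyo
    have T12 := agree_min hyo (Ne.symm hzy) hzo
    set A : ℤ := (agree x y : ℤ) - (agree x o : ℤ) - (agree y o : ℤ) with hA
    set B : ℤ := (agree x z : ℤ) - (agree x o : ℤ) - (agree z o : ℤ) with hB
    set C : ℤ := (agree z y : ℤ) - (agree z o : ℤ) - (agree y o : ℤ) with hC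
    have key : min B C ≤ A := by
      rw [hA, hB, hC]
      rw [agree_comm o y] at T4 T10
      rw [agree_comm o z] at T7
      rw [agree_comm y z] at T2 T12
      rw [agree_comm z x] at T3 T9
      rw [agree_comm y x] at T6
      omega
    rcases le_total B C with h | h
    · have : B ≤ A := by omega
      exact le_max_of_le_left (zpow_le_zpow_right_of_le_one₀ h0 h1.le this)
    · have : C ≤ A := by omega
      exact le_max_of_le_right (zpow_le_zpow_right_of_le_one₀ h0 h1.le this)
  · -- unboundedness
    intro M hM
    have hinv : 1 < lam⁻¹ := (one_lt_inv₀ h0).2 h1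
    obtain ⟨k, hk'⟩ := pow_unbounded_of_one_lt M hinv
    obtain ⟨c, hc⟩ : ∃ c : F, c ≠ o k := Fintype.exists_ne_of_one_lt_card (by omega) (o k)
    obtain ⟨d, hd⟩ : ∃ d : F, d ≠ o (k + 1) :=
      Fintype.exists_ne_of_one_lt_card (by omega) (o (k + 1))
    set x : ℕ → F := Function.update o k c with hx
    set y : ℕ → F := Function.update o (k + 1) d with hy
    have hxk : x k = c := Function.update_self k c o
    have hxi : ∀ i, i ≠ k → x i = o i := fun i hi => Function.update_of_ne hi c o
    have hyk : y (k + 1) = d := Function.update_self (k + 1) d o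
    have hyi : ∀ i, i ≠ k + 1 → y i = o i := fun i hi => Function.update_of_ne hi d o
    have hxo : x ≠ o := by
      intro h
      exact hc (by rw [← hxk, h])
    have hyo : y ≠ o := by
      intro h
      exact hd (by rw [← hyk, h])
    have hxy : x ≠ y := by
      intro h
      apply hc
      rw [← hxk, h, hyi k (by omega)]
    have haxo : agree x o = k :=
      agree_eq_of hxo (by rw [hxk]; exact hc) (fun i hi => hxi i (by omega))
    have hayo : agree y o = k + 1 :=
      agree_eq_of hyo (by rw [hyk]; exact hd) (fun i hi => hyi i (by omega))
    have haxy : agree x y = k := by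
      refine agree_eq_of hxy ?_ ?_
      · rw [hxk, hyi k (by omega)]; exact hc
      · intro i hi
        rw [hxi i (by omega), hyi i (by omega)]
    refine ⟨x, y, hxo, hyo, ?_⟩
    rw [sigma, if_neg hxy, haxy, haxo, hayo]
    have hexp : (k : ℤ) - (k : ℤ) - ((k : ℤ) + 1) = -((k : ℤ) + 1) := by ring
    push_cast
    rw [hexp, zpow_neg, ← inv_zpow]
    have h1' : lam⁻¹ ^ k ≤ lam⁻¹ ^ (k + 1) := pow_le_pow_right₀ hinv.le (by omega)
    calc M < lam⁻¹ ^ k := hk'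
      _ ≤ lam⁻¹ ^ (k + 1) := h1'
      _ = lam⁻¹ ^ ((k : ℤ) + 1) := by rw [← zpow_natCast]; push_cast; ring_nf
end

section
/- If (X,d) is an ultrametric space and a ∈ X, then the flattened function σ(x,y) = d(x,y)/(d(x,a)·d(y,a)) is an ultrametric on X \ {a}: for all x,y,z ∈ X \ {a}, σ(x,y) ≤ max{σ(x,z), σ(z,y)}. -/
/-!
Multiplying through by `d(x,a) d(y,a) d(z,a)` turns the claim into the ultrametric Ptolemy
inequality `d(x,y) d(z,a) ≤ max (d(x,z) d(y,a)) (d(x,a) d(y,z))`. For it, assume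
`d(x,y) ≤ d(x,z)` (the other case is symmetric in `x, y`). Either `d(z,a) ≤ d(y,a)` and the
first product dominates, or the isosceles triangles `z y a`, `x y a`, `z x a` bound `d(z,a)`
and `d(x,y)` by the cross distances.
-/

theorem div_le_max_div_div_of_mul_le_max {a b c p q r : ℝ} (ha : 0 < a) (hb : 0 < b)
    (hc : 0 < c) (h : p * c ≤ max (q * b) (a * r)) :
    p / (a * b) ≤ max (q / (a * c)) (r / (c * b)) := by
  have habc : 0 < a * b * c := by positivity
  calc p / (a * b) = p * c / (a * b * c) := by field_simp
    _ ≤ max (q * b) (a * r) / (a * b * c) := by gcongr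
    _ = max (q * b / (a * b * c)) (a * r / (a * b * c)) :=
      (max_div_div_right habc.le _ _).symm
    _ = max (q / (a * c)) (r / (c * b)) := by congr 1 <;> field_simp

namespace IsUltrametricDist

variable {X : Type*} [PseudoMetricSpace X] [IsUltrametricDist X]

theorem dist_le_of_dist_lt {x y z : X} (h : dist y z < dist x z) : dist x z ≤ dist x y :=
  (le_max_iff.mp (dist_triangle_max x y z)).resolve_right h.not_ge

theorem dist_mul_dist_le_max_of_dist_le {x y z a : X} (h : dist x y ≤ dist x z) :
    dist x y * dist z a ≤ max (dist x z * dist y a) (dist x a * dist y z) := by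
  rcases le_or_gt (dist z a) (dist y a) with hzy | hyz
  · exact le_max_of_le_left (mul_le_mul h hzy dist_nonneg dist_nonneg)
  have hza_zy : dist z a ≤ dist z y := dist_le_of_dist_lt hyz
  rcases le_or_gt (dist x y) (dist x a) with hxa | hax
  · refine le_max_of_le_right ?_
    rw [dist_comm y z]
    exact mul_le_mul hxa hza_zy dist_nonneg dist_nonneg
  have hxy_ya : dist x y ≤ dist y a := by
    rw [dist_comm x y]
    exact dist_le_of_dist_lt (by rwa [dist_comm a x, dist_comm y x])
  have hza_zx : dist z a ≤ dist x z := by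
    rw [dist_comm x z]
    exact dist_le_of_dist_lt (by linarith)
  refine le_max_of_le_left ?_
  rw [mul_comm (dist x z)]
  exact mul_le_mul hxy_ya hza_zx dist_nonneg dist_nonneg

theorem dist_mul_dist_le_max (x y z a : X) :
    dist x y * dist z a ≤ max (dist x z * dist y a) (dist x a * dist y z) := by
  rcases le_max_iff.mp (dist_triangle_max x z y) with h | h
  · exact dist_mul_dist_le_max_of_dist_le h
  · have := dist_mul_dist_le_max_of_dist_le (x := y) (y := x) (z := z) (a := a)
      (by rwa [dist_comm y x, dist_comm y z])
    rwa [dist_comm y x, max_comm, mul_comm (dist y z), mul_comm (dist y a)] at this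

end IsUltrametricDist

/-- In an ultrametric space with base point `a`, the flattened
function `σ(x,y) = d(x,y)/(d(x,a)·d(y,a))` satisfies the strong triangle
inequality on `X \ {a}`. -/
theorem flattening_ultrametric {X : Type*} [MetricSpace X]
    (hu : ∀ x y z : X, dist x y ≤ max (dist x z) (dist z y))
    (a : X) (x y z : X) (hx : x ≠ a) (hy : y ≠ a) (hz : z ≠ a) :
    dist x y / (dist x a * dist y a) ≤
      max (dist x z / (dist x a * dist z a))
        (dist z y / (dist z a * dist y a)) := by
  have : IsUltrametricDist X := ⟨fun x y z ↦ hu x z y⟩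
  have ptolemy := IsUltrametricDist.dist_mul_dist_le_max x y z a
  rw [dist_comm y z] at ptolemy
  exact div_le_max_div_div_of_mul_le_max (dist_pos.mpr hx) (dist_pos.mpr hy) (dist_pos.mpr hz)
    ptolemy
end

section
/- Let (X,d) be an unbounded ultrametric space with base point a, such that (X,d_a) is C-uniformly perfect, where d_a is the chordal metric on Ẋ = X ∪ {∞}. Then (Ẋ, d_a) is C-uniformly perfect. -/
/-!
Points of `X` are handled by the hypothesis, once a witness `∞` outside a chordal ball around
`x` is replaced by a point `y` far from `a`: by the isosceles property `d(x,y) = d(y,a)`, so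
`d_a(x,y) = d_a(x,∞)`. For the ball of radius `r ≤ 1` around `∞`, apply uniform perfectness in
`X` at a point `x` with `d(x,a) > C/r`. The resulting `z` cannot satisfy `d(z,a) ≥ d(x,a)`, since
then `d_a(x,z) ≤ 1/d(x,a) < r/C`; hence `d(z,a) < d(x,a)`, and again `d_a(x,z) = d_a(∞,z)`.
-/

/-- The chordal function `d_a` on `Ẋ = X ∪ {∞}` (modelled as `Option X`,
with `none` playing the role of `∞`):
`d_a(x,y) = d(x,y)/(max{1,d(x,a)}·max{1,d(y,a)})` for `x, y ∈ X`,
`d_a(x,∞) = 1/max{1,d(x,a)}`, and `d_a(∞,∞) = 0`. -/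
noncomputable def chordal {X : Type*} [MetricSpace X] (a : X) :
    Option X → Option X → ℝ
  | some x, some y => dist x y / (max 1 (dist x a) * max 1 (dist y a))
  | some x, none => 1 / max 1 (dist x a)
  | none, some y => 1 / max 1 (dist y a)
  | none, none => 0

def UniformlyPerfectAt {α : Type*} (ρ : α → α → ℝ) (C : ℝ) (p : α) : Prop :=
  ∀ r : ℝ, 0 < r → (∃ q, r ≤ ρ p q) → ∃ q, ρ p q < r ∧ r / C ≤ ρ p q

section Chordal

variable {X : Type*} [MetricSpace X] {a : X} {C : ℝ}

theorem chordal_comm (p q : Option X) : chordal a p q = chordal a q p := by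
  cases p <;> cases q <;> simp only [chordal, dist_comm, mul_comm]

theorem chordal_none_le_one (q : Option X) : chordal a none q ≤ 1 := by
  cases q with
  | none => simp only [chordal, zero_le_one]
  | some y => exact div_le_one_of_le₀ (le_max_left _ _) (by positivity)

theorem chordal_some_base {x : X} (hx : 1 ≤ dist x a) : chordal a (some x) (some a) = 1 := by
  have : dist x a ≠ 0 := by positivity
  simp [chordal, max_eq_right hx, this]

variable [IsUltrametricDist X]

theorem chordal_some_some_eq_of_dist_lt {x z : X} (hx : 1 ≤ dist x a)
    (h : dist z a < dist x a) : chordal a (some x) (some z) = chordal a none (some z) := by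
  have hxz : dist x z = dist x a := by
    rw [IsUltrametricDist.dist_eq_max_of_dist_ne_dist x a z (by rw [dist_comm a z]; exact h.ne'),
      dist_comm a z, max_eq_left h.le]
  have : dist x a ≠ 0 := by positivity
  simp only [chordal, hxz, max_eq_right hx, ← div_div, div_self this]

theorem chordal_some_some_le_of_dist_le {x z : X} (h : dist x a ≤ dist z a) :
    chordal a (some x) (some z) ≤ chordal a (some x) none := by
  have hxz : dist x z ≤ max 1 (dist z a) :=
    (dist_triangle_max x a z).trans (by rw [dist_comm a z, max_eq_right h]; exact le_max_right _ _)
  simp only [chordal]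
  rw [mul_comm, ← div_div]
  exact div_le_div_of_nonneg_right ((div_le_one (by positivity)).mpr hxz) (by positivity)

variable (hub : ∀ R : ℝ, ∃ x : X, R < dist x a)
  (hX : ∀ x : X, UniformlyPerfectAt (fun x y => chordal a (some x) (some y)) C x)
include hub hX

theorem uniformlyPerfectAt_chordal_some (x : X) : UniformlyPerfectAt (chordal a) C (some x) := by
  rintro r hr ⟨q, hq⟩
  suffices ∃ y, r ≤ chordal a (some x) (some y) by
    obtain ⟨z, hz⟩ := hX x r hr this
    exact ⟨some z, hz⟩
  cases q with
  | some y => exact ⟨y, hq⟩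
  | none =>
    obtain ⟨y, hy⟩ := hub (max 1 (dist x a))
    rw [max_lt_iff] at hy
    refine ⟨y, ?_⟩
    rwa [chordal_comm, chordal_some_some_eq_of_dist_lt hy.1.le hy.2, chordal_comm]

theorem uniformlyPerfectAt_chordal_none (hC : 0 < C) : UniformlyPerfectAt (chordal a) C none := by
  rintro r hr ⟨q, hq⟩
  obtain ⟨x, hx⟩ := hub (max 1 (C / r))
  rw [max_lt_iff] at hx
  have hx₁ : 1 ≤ dist x a := hx.1.le
  have hxr : 1 / dist x a < r / C := by
    rw [div_lt_div_iff₀ (by linarith) hC]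
    linarith [(div_lt_iff₀ hr).mp hx.2]
  have hr₁ : r ≤ chordal a (some x) (some a) := by
    rw [chordal_some_base hx₁]
    exact hq.trans (chordal_none_le_one q)
  obtain ⟨z, hz_lt, hz_ge⟩ := hX x r hr ⟨a, hr₁⟩
  dsimp only at hz_lt hz_ge
  have hza : dist z a < dist x a := by
    by_contra! h
    have : chordal a (some x) (some z) ≤ 1 / dist x a := by
      simpa only [chordal, max_eq_right hx₁] using chordal_some_some_le_of_dist_le (a := a) h
    linarith
  rw [chordal_some_some_eq_of_dist_lt hx₁ hza] at hz_lt hz_ge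
  exact ⟨some z, hz_lt, hz_ge⟩

end Chordal

/-- Let `(X,d)` be an unbounded ultrametric space with base
point `a` such that `(X, d_a)` is `C`-uniformly perfect. Then
`(Ẋ, d_a) = (X ∪ {∞}, d_a)` is `C`-uniformly perfect. (Balls are taken with
respect to the chordal function `d_a`.) -/
theorem chordal_extension_uniformly_perfect {X : Type*} [MetricSpace X]
    (hu : ∀ x y z : X, dist x y ≤ max (dist x z) (dist z y))
    (a : X) (hub : ∀ R : ℝ, ∃ x : X, R < dist x a)
    (C : ℝ) (hC : 1 < C)
    (hX : ∀ (x : X) (r : ℝ), 0 < r →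
      (∃ y : X, r ≤ chordal a (some x) (some y)) →
      ∃ z : X, chordal a (some x) (some z) < r ∧
        r / C ≤ chordal a (some x) (some z)) :
    ∀ (p : Option X) (r : ℝ), 0 < r →
      (∃ q : Option X, r ≤ chordal a p q) →
      ∃ q : Option X, chordal a p q < r ∧ r / C ≤ chordal a p q := by
  have : IsUltrametricDist X := ⟨fun x y z => hu x z y⟩
  rintro (_ | x)
  · exact uniformlyPerfectAt_chordal_none hub hX (by linarith)
  · exact uniformlyPerfectAt_chordal_some hub hX x
end

section
/- Suppose (X,d) is an unbounded, doubling, complete ultrametric space. Then there exist k ∈ ℕ, 0 < λ < 1, a base point o ∈ F^∞, and a bilipschitz embedding of (X,d) into (F^∞ \ {o}, σ_λ), where σ_λ(x,y) = λ^{L(x,y) − L(x,o) − L(y,o)}. -/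
/-!
Fix a base point `p` and let the shell of `x` be the least `a` with `d(x, p) < 2 ^ a`. In an
ultrametric space the balls of a fixed radius partition the space, and by doubling each ball of
radius `2 ^ (m + 1)` contains at most `N` balls of radius `2 ^ m`; numbering them gives digits
`c m x ∈ Fin N` determined by the ball of radius `2 ^ (m + 1)` around `x`. The code of `x`
is `0` on its first `a` places and the shifted digit of `x` at scale `2 ^ (2 a - 1 - j)` at
place `j ≥ a`. For `x ≠ y` the codes first differ at place
`a x + a y - 1 - ⌊log₂ d(x, y)⌋`, whence `σ_{1/2}(f x, f y) = 2 ^ (⌊log₂ d(x, y)⌋ + 1)`, which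
lies in `(d(x, y), 2 d(x, y)]`.
-/

open Classical

open Metric

section Agree

variable {F : Type*} {u v : ℕ → F} {n : ℕ}

lemma agree_eq_of_eqOn_of_ne (heq : ∀ j < n, u j = v j) (hne : u n ≠ v n) : agree u v = n := by
  have huv : u ≠ v := fun h => hne (congrFun h n)
  rw [agree, dif_neg huv]
  exact (Nat.find_eq_iff _).mpr ⟨hne, fun m hm => not_not_intro (heq m hm)⟩

lemma sigma_eq_of_eqOn_of_ne (lam : ℝ) (o : ℕ → F) (heq : ∀ j < n, u j = v j)
    (hne : u n ≠ v n) :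
    sigma lam o u v = lam ^ ((n : ℤ) - agree u o - agree v o) := by
  rw [sigma, if_neg fun h => hne (congrFun h n), agree_eq_of_eqOn_of_ne heq hne]

end Agree

lemma IsUltrametricDist.ball_eq_ball_iff {X : Type*} [PseudoMetricSpace X] [IsUltrametricDist X]
    {x y : X} {r : ℝ} (hr : 0 < r) : ball x r = ball y r ↔ dist x y < r := by
  refine ⟨fun h => ?_, fun h => IsUltrametricDist.ball_eq_of_mem (mem_ball'.mpr h)⟩
  have hy : y ∈ ball x r := h ▸ mem_ball_self hr
  exact mem_ball'.mp hy

section Digits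

variable {X : Type*} [PseudoMetricSpace X] [Nonempty X] {N : ℕ}
  (hN : ∀ (x : X) (r : ℝ), ∃ s : Finset X, s.card ≤ N ∧
    ball x r ⊆ ⋃ c ∈ s, ball c (r / 2))

/-- The children of radius `r` of a ball `B` of radius `2 * r`, chosen from `B` as a set rather
than from a centre, so that all points of `B` see the same list. -/
noncomputable def childBalls (r : ℝ) (B : Set X) : List (Set X) :=
  ((hN (Classical.epsilon (· ∈ B)) (2 * r)).choose.image (ball · r)).toList

lemma length_childBalls_le (r : ℝ) (B : Set X) : (childBalls hN r B).length ≤ N := by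
  rw [childBalls, Finset.length_toList]
  exact Finset.card_image_le.trans (hN _ _).choose_spec.1

variable [IsUltrametricDist X]

lemma ball_mem_childBalls {r : ℝ} (hr : 0 < r) (x : X) :
    ball x r ∈ childBalls hN r (ball x (2 * r)) := by
  set z := Classical.epsilon (· ∈ ball x (2 * r))
  have hz : z ∈ ball x (2 * r) :=
    Classical.epsilon_spec (p := (· ∈ ball x (2 * r))) ⟨x, mem_ball_self (by positivity)⟩
  obtain ⟨-, hcover⟩ := (hN z (2 * r)).choose_spec
  obtain ⟨c, hc, hxc⟩ := Set.mem_iUnion₂.mp (hcover (mem_ball_comm.mp hz))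
  rw [mul_div_cancel_left₀ r two_ne_zero] at hxc
  rw [childBalls, Finset.mem_toList, ← IsUltrametricDist.ball_eq_of_mem hxc]
  exact Finset.mem_image_of_mem _ hc

theorem exists_digits (hN : ∀ (x : X) (r : ℝ), ∃ s : Finset X, s.card ≤ N ∧
    ball x r ⊆ ⋃ c ∈ s, ball c (r / 2)) {r : ℝ} (hr : 0 < r) :
    ∃ c : X → Fin N, ∀ x y, dist x y < 2 * r → (c x = c y ↔ dist x y < r) := by
  refine ⟨fun x => ⟨(childBalls hN r (ball x (2 * r))).idxOf (ball x r),
    (List.idxOf_lt_length_of_mem (ball_mem_childBalls hN hr x)).trans_le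
      (length_childBalls_le hN _ _)⟩, fun x y hxy => ?_⟩
  have hB : ball x (2 * r) = ball y (2 * r) :=
    (IsUltrametricDist.ball_eq_ball_iff (by positivity)).mpr hxy
  rw [Fin.mk.injEq, hB, List.idxOf_inj (hB ▸ ball_mem_childBalls hN hr x),
    IsUltrametricDist.ball_eq_ball_iff hr]

end Digits

section CantorCode

variable {X : Type*} [MetricSpace X] {N : ℕ}

def SeparatesScales (c : ℤ → X → Fin N) : Prop :=
  ∀ m x y, dist x y < 2 * 2 ^ m → (c m x = c m y ↔ dist x y < 2 ^ m)

noncomputable def shell (p x : X) : ℕ :=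
  Nat.find (pow_unbounded_of_one_lt (dist x p) one_lt_two)

lemma dist_lt_two_zpow_shell (p x : X) : dist x p < 2 ^ (shell p x : ℤ) := by
  rw [zpow_natCast]
  exact Nat.find_spec (pow_unbounded_of_one_lt (dist x p) one_lt_two)

lemma two_zpow_le_dist_of_shell_pos {p x : X} (h : 0 < shell p x) :
    2 ^ ((shell p x : ℤ) - 1) ≤ dist x p := by
  have : (2 : ℝ) ^ (shell p x - 1) ≤ dist x p :=
    not_lt.mp (Nat.find_min _ (Nat.sub_lt h one_pos))
  rwa [← zpow_natCast, Nat.cast_sub h, Nat.cast_one] at this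

noncomputable def cantorCode (c : ℤ → X → Fin N) (p x : X) : ℕ → Fin (N + 1) := fun j =>
  if j < shell p x then 0 else (c (2 * shell p x - 1 - j) x).succ

variable {c : ℤ → X → Fin N} {p x y : X}

lemma cantorCode_ne_zero_of_shell_le {j : ℕ} (h : shell p x ≤ j) :
    cantorCode c p x j ≠ 0 := by
  simp [cantorCode, not_lt.mpr h]

lemma agree_cantorCode_zero (c : ℤ → X → Fin N) (p x : X) :
    agree (cantorCode c p x) 0 = shell p x :=
  agree_eq_of_eqOn_of_ne (fun j hj => by simp [cantorCode, hj])
    (cantorCode_ne_zero_of_shell_le le_rfl)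

lemma cantorCode_ne_zero (c : ℤ → X → Fin N) (p x : X) : cantorCode c p x ≠ 0 :=
  fun h => cantorCode_ne_zero_of_shell_le (c := c) (le_refl (shell p x)) (congrFun h _)

lemma lt_two_zpow_iff_log_lt {r : ℝ} (hr : 0 < r) {m : ℤ} : r < 2 ^ m ↔ Int.log 2 r < m := by
  exact_mod_cast Int.lt_zpow_iff_log_lt one_lt_two hr

lemma two_zpow_le_iff_le_log {r : ℝ} (hr : 0 < r) {m : ℤ} :
    2 ^ m ≤ r ↔ m ≤ Int.log 2 r := by
  exact_mod_cast Int.zpow_le_iff_le_log one_lt_two hr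

lemma SeparatesScales.eq_iff_log_dist_lt (hc : SeparatesScales c) (hxy : x ≠ y) {m : ℤ}
    (hm : Int.log 2 (dist x y) ≤ m) : c m x = c m y ↔ Int.log 2 (dist x y) < m := by
  have hd := dist_pos.mpr hxy
  rw [hc m x y, lt_two_zpow_iff_log_lt hd]
  rw [← zpow_one_add₀ two_ne_zero, lt_two_zpow_iff_log_lt hd]
  omega

variable [IsUltrametricDist X]

lemma exists_first_ne_cantorCode_of_shell_eq (hc : SeparatesScales c) (hxy : x ≠ y)
    (hshell : shell p x = shell p y) :
    ∃ n : ℕ, (n : ℤ) = shell p x + shell p y - 1 - Int.log 2 (dist x y) ∧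
      (∀ j < n, cantorCode c p x j = cantorCode c p y j) ∧
      cantorCode c p x n ≠ cantorCode c p y n := by
  set a := shell p x
  set e := Int.log 2 (dist x y)
  have hea : e < a := by
    rw [← lt_two_zpow_iff_log_lt (dist_pos.mpr hxy)]
    refine (dist_triangle_max x p y).trans_lt (max_lt (dist_lt_two_zpow_shell p x) ?_)
    rw [dist_comm, hshell]
    exact dist_lt_two_zpow_shell p y
  have hdigit : ∀ j : ℕ, a ≤ j →
      (cantorCode c p x j = cantorCode c p y j ↔ c (2 * a - 1 - j) x = c (2 * a - 1 - j) y) := by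
    intro j hj
    simp [cantorCode, ← hshell, not_lt.mpr hj, a]
  refine ⟨(2 * a - 1 - e).toNat, by omega, fun j hj => ?_, ?_⟩
  · rcases lt_or_ge j a with hja | hja
    · simp [cantorCode, ← hshell, hja, a]
    · exact (hdigit j hja).mpr ((hc.eq_iff_log_dist_lt hxy (by omega)).mpr (by omega))
  · rw [Ne, hdigit _ (by omega), hc.eq_iff_log_dist_lt hxy (by omega)]
    omega

lemma exists_first_ne_cantorCode_of_shell_lt (hshell : shell p x < shell p y) :
    ∃ n : ℕ, (n : ℤ) = shell p x + shell p y - 1 - Int.log 2 (dist x y) ∧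
      (∀ j < n, cantorCode c p x j = cantorCode c p y j) ∧
      cantorCode c p x n ≠ cantorCode c p y n := by
  set a := shell p x
  set b := shell p y
  have hyp : 2 ^ ((b : ℤ) - 1) ≤ dist y p := two_zpow_le_dist_of_shell_pos (by omega)
  have hxp : dist x p < dist p y := by
    rw [dist_comm p y]
    exact (dist_lt_two_zpow_shell p x).trans_le
      ((zpow_le_zpow_right₀ one_le_two (by omega)).trans hyp)
  have hdist : dist x y = dist y p := by
    rw [IsUltrametricDist.dist_eq_max_of_dist_ne_dist x p y hxp.ne, max_eq_right hxp.le,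
      dist_comm]
  have hd : 0 < dist x y := hdist ▸ (zpow_pos two_pos _).trans_le hyp
  have hlog : Int.log 2 (dist x y) = b - 1 := by
    have h1 := (two_zpow_le_iff_le_log hd).mp (hdist ▸ hyp)
    have h2 := (lt_two_zpow_iff_log_lt hd).mp (hdist ▸ dist_lt_two_zpow_shell p y)
    omega
  refine ⟨a, by omega, fun j hj => ?_, ?_⟩
  · simp [cantorCode, hj, hj.trans hshell, a, b]
  · simp [cantorCode, hshell, a, b]

lemma exists_first_ne_cantorCode (hc : SeparatesScales c) (hxy : x ≠ y) :
    ∃ n : ℕ, (n : ℤ) = shell p x + shell p y - 1 - Int.log 2 (dist x y) ∧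
      (∀ j < n, cantorCode c p x j = cantorCode c p y j) ∧
      cantorCode c p x n ≠ cantorCode c p y n := by
  wlog h : shell p x ≤ shell p y generalizing x y
  · obtain ⟨n, hn, heq, hne⟩ := this hxy.symm (le_of_not_ge h)
    exact ⟨n, by rw [dist_comm]; omega, fun j hj => (heq j hj).symm, hne.symm⟩
  rcases h.eq_or_lt with hshell | hshell
  · exact exists_first_ne_cantorCode_of_shell_eq hc hxy hshell
  · exact exists_first_ne_cantorCode_of_shell_lt hshell

theorem sigma_cantorCode (hc : SeparatesScales c) (hxy : x ≠ y) :
    sigma (1 / 2) 0 (cantorCode c p x) (cantorCode c p y) = 2 ^ (Int.log 2 (dist x y) + 1) := by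
  obtain ⟨n, hn, heq, hne⟩ := exists_first_ne_cantorCode (p := p) hc hxy
  rw [sigma_eq_of_eqOn_of_ne _ _ heq hne, agree_cantorCode_zero, agree_cantorCode_zero, one_div,
    inv_zpow']
  congr 1
  omega

theorem sigma_cantorCode_mem_Icc (hc : SeparatesScales c) (p x y : X) :
    sigma (1 / 2) 0 (cantorCode c p x) (cantorCode c p y) ∈
      Set.Icc (dist x y) (2 * dist x y) := by
  rcases eq_or_ne x y with rfl | hxy
  · simp [sigma]
  have hd := dist_pos.mpr hxy
  rw [sigma_cantorCode hc hxy, zpow_add_one₀ two_ne_zero, mul_comm _ (2 : ℝ)]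
  refine ⟨?_, by gcongr; exact (two_zpow_le_iff_le_log hd).mpr le_rfl⟩
  rw [← zpow_one_add₀ two_ne_zero]
  exact ((lt_two_zpow_iff_log_lt hd).mpr (by omega)).le

end CantorCode

theorem bilipschitz_embedding_cantor_general {X : Type*} [MetricSpace X]
    (hu : ∀ x y z : X, dist x y ≤ max (dist x z) (dist z y))
    (N : ℕ) (hN : ∀ (x : X) (r : ℝ), ∃ s : Finset X, s.card ≤ N ∧
      Metric.ball x r ⊆ ⋃ c ∈ s, Metric.ball c (r / 2)) :
    ∃ k : ℕ, 2 ≤ k ∧ ∃ lam : ℝ, 0 < lam ∧ lam < 1 ∧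
      ∃ (o : ℕ → Fin k) (f : X → (ℕ → Fin k)) (L : ℝ), 1 ≤ L ∧
        (∀ x : X, f x ≠ o) ∧
        ∀ x y : X, dist x y / L ≤ sigma lam o (f x) (f y) ∧
          sigma lam o (f x) (f y) ≤ L * dist x y := by
  have : IsUltrametricDist X := ⟨fun x y z => hu x z y⟩
  rcases isEmpty_or_nonempty X with hX | hX
  · exact ⟨2, le_rfl, 1 / 2, by norm_num, by norm_num, 0, isEmptyElim, 1, le_rfl, isEmptyElim,
      isEmptyElim⟩
  choose c hc using fun m : ℤ => exists_digits hN (zpow_pos (two_pos (α := ℝ)) m)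
  obtain ⟨p⟩ := hX
  refine ⟨N + 1, Nat.succ_le_succ (c 0 p).pos, 1 / 2, by norm_num, by norm_num, 0,
    cantorCode c p, 2, one_le_two, cantorCode_ne_zero c p, fun x y => ?_⟩
  obtain ⟨hlower, hupper⟩ := sigma_cantorCode_mem_Icc hc p x y
  exact ⟨(half_le_self dist_nonneg).trans hlower, hupper⟩

/-- Every unbounded, doubling, complete ultrametric space admits
a bilipschitz embedding into the symbolic `k`-Cantor set
`(F^∞ \ {o}, σ_λ)` for some `k`, `0 < λ < 1` and base point `o`. -/
theorem bilipschitz_embedding_cantor {X : Type*} [MetricSpace X] [CompleteSpace X]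
    (hu : ∀ x y z : X, dist x y ≤ max (dist x z) (dist z y))
    (hub : ∀ R : ℝ, ∃ x y : X, R < dist x y)
    (N : ℕ) (hN : ∀ (x : X) (r : ℝ), ∃ s : Finset X, s.card ≤ N ∧
      Metric.ball x r ⊆ ⋃ c ∈ s, Metric.ball c (r / 2)) :
    ∃ k : ℕ, 2 ≤ k ∧ ∃ lam : ℝ, 0 < lam ∧ lam < 1 ∧
      ∃ (o : ℕ → Fin k) (f : X → (ℕ → Fin k)) (L : ℝ), 1 ≤ L ∧
        (∀ x : X, f x ≠ o) ∧
        ∀ x y : X, dist x y / L ≤ sigma lam o (f x) (f y) ∧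
          sigma lam o (f x) (f y) ≤ L * dist x y :=
  bilipschitz_embedding_cantor_general hu N hN
end
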